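/- There exist universal constants 0 < c₁ ≤ c₂ such that for every block-model parameter pair (p,Q) on 2 communities with p₁ ≤ p₂: c₁ · M ≤ Φ_{p,Q}(Cyc_4) ≤ c₂ · M, where M = max(p₁⁴·Q₁₁⁴, p₁²·Q₁₂⁴, Q₂₂⁴). -/

import Mathlib

set_option linter.unusedVariables false

open Finset

open Finset

/-- The Fourier coefficient Φ_{p,Q}(H) of a finite simple graph `H`. -/
noncomputable def Phi {k : ℕ} (p : Fin k → ℝ) (Q : Fin k → Fin k → ℝ)
    (hQ : ∀ i j, Q i j = Q j i) {V : Type} [Fintype V] [DecidableEq V]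
    (H : SimpleGraph V) [DecidableRel H.Adj] : ℝ :=
  ∑ x : V → Fin k, (∏ v, p (x v)) *
    ∏ e ∈ H.edgeFinset,
      Sym2.lift ⟨fun u v => Q (x u) (x v), fun u v => hQ (x u) (x v)⟩ e

/-- The partition value Ψ_{p,Q}(H) = |Φ_{p,Q}(H)|^{1/|V(H)|}. -/
noncomputable def Psi {k : ℕ} (p : Fin k → ℝ) (Q : Fin k → Fin k → ℝ)
    (hQ : ∀ i j, Q i j = Q j i) {V : Type} [Fintype V] [DecidableEq V]
    (H : SimpleGraph V) [DecidableRel H.Adj] : ℝ :=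
  |Phi p Q hQ H| ^ ((Fintype.card V : ℝ)⁻¹)

/-- The star graph with one center (vertex 0) joined to `t` leaves. -/
def StarGraph (t : ℕ) : SimpleGraph (Fin (t + 1)) where
  Adj u v := u ≠ v ∧ (u = 0 ∨ v = 0)
  symm := ⟨fun u v h => ⟨h.1.symm, h.2.symm⟩⟩
  loopless := ⟨fun u h => h.1 rfl⟩

instance (t : ℕ) : DecidableRel (StarGraph t).Adj :=
  fun u v => inferInstanceAs (Decidable (u ≠ v ∧ (u = 0 ∨ v = 0)))

/-- The cycle graph on 4 vertices. -/
def Cyc4 : SimpleGraph (Fin 4) where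
  Adj u v := u ≠ v ∧ ((u.val + 1) % 4 = v.val ∨ (v.val + 1) % 4 = u.val)
  symm := ⟨fun u v h => ⟨h.1.symm, h.2.symm⟩⟩
  loopless := ⟨fun u h => h.1 rfl⟩

instance : DecidableRel Cyc4.Adj :=
  fun u v => inferInstanceAs
    (Decidable (u ≠ v ∧ ((u.val + 1) % 4 = v.val ∨ (v.val + 1) % 4 = u.val)))

/-!
With `S = P^{1/2} Q P^{1/2}` for `P = diag p`, the 4-cycle coefficient is `tr S⁴ = ‖S²‖²_F`, a sum
of squares. For `S = !![a, z; z, b]` it equals `(a² + z²)² + 2z²(a + b)² + (z² + b²)²`, which lies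
between `max (a⁴, z⁴, b⁴)` and 16 times it. Here `a = p₁Q₁₁`, `z² = p₁p₂Q₁₂²`, `b = p₂Q₂₂`, and since
`1/2 ≤ p₂ ≤ 1` this maximum is within a factor 16 of `max (p₁⁴Q₁₁⁴, p₁²Q₁₂⁴, Q₂₂⁴)`.
-/

lemma Fintype.sum_fun_fin_four {α M : Type*} [Fintype α] [AddCommMonoid M] (f : (Fin 4 → α) → M) :
    ∑ x, f x = ∑ a, ∑ b, ∑ c, ∑ d, f ![a, b, c, d] := by
  let e : α × α × α × α ≃ (Fin 4 → α) :=
    { toFun t := ![t.1, t.2.1, t.2.2.1, t.2.2.2]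
      invFun x := (x 0, x 1, x 2, x 3)
      left_inv _ := rfl
      right_inv x := by ext i; fin_cases i <;> rfl }
  rw [← e.sum_comp]
  simp only [Fintype.sum_prod_type]
  rfl

lemma prod_edgeFinset_Cyc4 {M : Type*} [CommMonoid M] (g : Sym2 (Fin 4) → M) :
    ∏ e ∈ Cyc4.edgeFinset, g e = g s(0, 1) * g s(1, 2) * g s(2, 3) * g s(3, 0) := by
  rw [show Cyc4.edgeFinset = {s(0, 1), s(1, 2), s(2, 3), s(3, 0)} by decide,
    prod_insert (by decide), prod_insert (by decide), prod_insert (by decide), prod_singleton]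
  ac_rfl

lemma Phi_Cyc4 {k : ℕ} (p : Fin k → ℝ) (Q : Fin k → Fin k → ℝ) (hQ : ∀ i j, Q i j = Q j i) :
    Phi p Q hQ Cyc4 =
      ∑ a, ∑ b, ∑ c, ∑ d, p a * p b * p c * p d * (Q a b * Q b c * Q c d * Q d a) := by
  simp only [Phi, Fintype.sum_fun_fin_four, Fin.prod_univ_four, prod_edgeFinset_Cyc4, Sym2.lift_mk]
  rfl

lemma Phi_Cyc4_eq_sum_sq {k : ℕ} (p : Fin k → ℝ) (Q : Fin k → Fin k → ℝ) (hQ : ∀ i j, Q i j = Q j i) :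
    Phi p Q hQ Cyc4 = ∑ a, ∑ c, p a * p c * (∑ b, p b * Q a b * Q b c) ^ 2 := by
  rw [Phi_Cyc4]
  refine sum_congr rfl fun a _ => ?_
  rw [sum_comm]
  refine sum_congr rfl fun c _ => ?_
  rw [sq, sum_mul_sum, mul_sum]
  refine sum_congr rfl fun b _ => ?_
  rw [mul_sum]
  refine sum_congr rfl fun d _ => ?_
  rw [hQ c d, hQ d a]
  ring

/-- `trace (S ^ 4)` for the symmetric matrix `S = !![a, √y; √y, b]`. -/
def traceFourthPow (a b y : ℝ) : ℝ := (a ^ 2 + y) ^ 2 + 2 * y * (a + b) ^ 2 + (y + b ^ 2) ^ 2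

lemma max_le_traceFourthPow {a b y : ℝ} (hy : 0 ≤ y) :
    max (a ^ 4) (max (y ^ 2) (b ^ 4)) ≤ traceFourthPow a b y := by
  have hmid : 0 ≤ 2 * y * (a + b) ^ 2 := by positivity
  refine max_le ?_ (max_le ?_ ?_) <;> unfold traceFourthPow <;>
    nlinarith [sq_nonneg (a ^ 2 + y), sq_nonneg (y + b ^ 2), sq_nonneg a, sq_nonneg b]

lemma traceFourthPow_le {a b y : ℝ} (hy : 0 ≤ y) :
    traceFourthPow a b y ≤ 16 * max (a ^ 4) (max (y ^ 2) (b ^ 4)) := by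
  have ha : a ^ 4 ≤ max (a ^ 4) (max (y ^ 2) (b ^ 4)) := le_max_left _ _
  have hy' : y ^ 2 ≤ max (a ^ 4) (max (y ^ 2) (b ^ 4)) := (le_max_left _ _).trans (le_max_right _ _)
  have hb : b ^ 4 ≤ max (a ^ 4) (max (y ^ 2) (b ^ 4)) := (le_max_right _ _).trans (le_max_right _ _)
  have hcross : 2 * y * (a + b) ^ 2 ≤ 4 * y ^ 2 + 2 * a ^ 4 + 2 * b ^ 4 := by
    nlinarith [sq_nonneg (a - b), sq_nonneg (y - a ^ 2), sq_nonneg (y - b ^ 2)]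
  have : traceFourthPow a b y ≤ 4 * a ^ 4 + 8 * y ^ 2 + 4 * b ^ 4 := by
    unfold traceFourthPow
    nlinarith [sq_nonneg (a ^ 2 - y), sq_nonneg (y - b ^ 2)]
  linarith

lemma Phi_Cyc4_two (p : Fin 2 → ℝ) (Q : Fin 2 → Fin 2 → ℝ) (hQ : ∀ i j, Q i j = Q j i) :
    Phi p Q hQ Cyc4 = traceFourthPow (p 0 * Q 0 0) (p 1 * Q 1 1) (p 0 * p 1 * Q 0 1 ^ 2) := by
  simp only [Phi_Cyc4_eq_sum_sq, Fin.sum_univ_two, traceFourthPow, hQ 1 0]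
  ring

section
variable (s q r u : ℝ) {t : ℝ}

lemma max_fourth_powers_le (ht₀ : 0 ≤ t) (ht₁ : t ≤ 1) :
    max ((s * q) ^ 4) (max ((s * t * r ^ 2) ^ 2) ((t * u) ^ 4)) ≤
      max (s ^ 4 * q ^ 4) (max (s ^ 2 * r ^ 4) (u ^ 4)) := by
  have hr : (s * t * r ^ 2) ^ 2 ≤ s ^ 2 * r ^ 4 := by
    have : t ^ 2 ≤ 1 := pow_le_one₀ ht₀ ht₁
    nlinarith [mul_nonneg (sq_nonneg s) (pow_nonneg (sq_nonneg r) 2)]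
  have hu : (t * u) ^ 4 ≤ u ^ 4 := by
    rw [mul_pow]
    exact mul_le_of_le_one_left (by positivity) (pow_le_one₀ ht₀ ht₁)
  exact max_le_max (mul_pow s q 4).le (max_le_max hr hu)

lemma max_fourth_powers_le_mul (ht : 1 / 2 ≤ t) :
    max (s ^ 4 * q ^ 4) (max (s ^ 2 * r ^ 4) (u ^ 4)) ≤
      16 * max ((s * q) ^ 4) (max ((s * t * r ^ 2) ^ 2) ((t * u) ^ 4)) := by
  rw [mul_max_of_nonneg _ _ (by norm_num), mul_max_of_nonneg _ _ (by norm_num)]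
  refine max_le_max ?_ (max_le_max ?_ ?_)
  · nlinarith [pow_nonneg (mul_self_nonneg (s * q)) 2]
  · have : 1 ≤ 16 * t ^ 2 := by nlinarith
    calc s ^ 2 * r ^ 4 ≤ 16 * t ^ 2 * (s ^ 2 * r ^ 4) := le_mul_of_one_le_left (by positivity) this
      _ = 16 * (s * t * r ^ 2) ^ 2 := by ring
  · have : 1 ≤ 16 * t ^ 4 := by nlinarith [sq_nonneg (t ^ 2 - 1 / 4)]
    calc u ^ 4 ≤ 16 * t ^ 4 * u ^ 4 := le_mul_of_one_le_left (by positivity) this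
      _ = 16 * (t * u) ^ 4 := by ring

end

/-- two-sided bound on the signed 4-cycle coefficient in 2-SBMs. -/
theorem stmt10 :
    ∃ c₁ c₂ : ℝ, 0 < c₁ ∧ c₁ ≤ c₂ ∧
      ∀ (p : Fin 2 → ℝ) (Q : Fin 2 → Fin 2 → ℝ),
        (∀ i, 0 ≤ p i) → (∑ i, p i = 1) →
        ∀ (hQ : ∀ i j, Q i j = Q j i),
        (∀ i j, |Q i j| ≤ 1) → p 0 ≤ p 1 →
        c₁ * max ((p 0) ^ 4 * (Q 0 0) ^ 4)
            (max ((p 0) ^ 2 * (Q 0 1) ^ 4) ((Q 1 1) ^ 4)) ≤ Phi p Q hQ Cyc4 ∧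
        Phi p Q hQ Cyc4 ≤
          c₂ * max ((p 0) ^ 4 * (Q 0 0) ^ 4)
            (max ((p 0) ^ 2 * (Q 0 1) ^ 4) ((Q 1 1) ^ 4)) := by
  refine ⟨1 / 16, 16, by norm_num, by norm_num, fun p Q hp hsum hQ _ hle => ?_⟩
  have hsum' : p 0 + p 1 = 1 := by simpa only [Fin.sum_univ_two] using hsum
  have hp₁ : 1 / 2 ≤ p 1 := by linarith
  have hy : 0 ≤ p 0 * p 1 * Q 0 1 ^ 2 := mul_nonneg (mul_nonneg (hp 0) (hp 1)) (sq_nonneg _)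
  have hlow := max_fourth_powers_le_mul (p 0) (Q 0 0) (Q 0 1) (Q 1 1) hp₁
  have hup := max_fourth_powers_le (p 0) (Q 0 0) (Q 0 1) (Q 1 1) (hp 1) (by linarith [hp 0])
  rw [Phi_Cyc4_two]
  constructor
  · linarith [max_le_traceFourthPow (a := p 0 * Q 0 0) (b := p 1 * Q 1 1) hy]
  · linarith [traceFourthPow_le (a := p 0 * Q 0 0) (b := p 1 * Q 1 1) hy]
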